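/- arXiv:1912.09155 — 2 statements merged into one kernel-verified Lean document; each statement's English description precedes it below -/
import Mathlib

section
/- Let K be an infinite field and let F = K(t) be the field of rational functions over K (a purely transcendental extension). Then K is existentially closed in F: every existential first-order sentence in the language of rings with parameters from K that holds in F also holds in K. -/
/-!
Specialize a witness `b` in `K(t)` at a point `t = c` of `K`. Away from finitely many `c`
(the zeros of the denominators involved) evaluation at `c` respects `+`, `·` and `-`, so it
commutes with the realization of terms; and two distinct rational functions differ at all but
finitely many `c` (the zeros of the numerator of their difference). Hence, for cofinitely many `c`,
every atomic formula has the same truth value at `b` and at `b(c)`, and so does the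
quantifier-free `φ`. As `K` is infinite, such a `c` exists.
-/

open FirstOrder Language Polynomial

noncomputable instance fieldRingStructure (R : Type*) [Field R] : Language.ring.Structure R :=
  (FirstOrder.Ring.compatibleRingOfRing R).toStructure

open Filter

theorem Polynomial.eventually_eval_ne_zero {R : Type*} [CommRing R] [IsDomain R] {p : R[X]}
    (hp : p ≠ 0) :
    ∀ᶠ c in cofinite, p.eval c ≠ 0 :=
  eventually_cofinite.2 (by simpa using finite_setOfPred_isRoot hp)

namespace RatFunc

variable {K : Type*} [Field K]

theorem eventually_eval_denom_ne_zero (f : RatFunc K) :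
    ∀ᶠ c in cofinite, f.denom.eval c ≠ 0 :=
  Polynomial.eventually_eval_ne_zero f.denom_ne_zero

theorem eventually_eval_add (f g : RatFunc K) :
    ∀ᶠ c in cofinite, (f + g).eval (RingHom.id K) c =
      f.eval (RingHom.id K) c + g.eval (RingHom.id K) c := by
  filter_upwards [f.eventually_eval_denom_ne_zero, g.eventually_eval_denom_ne_zero] with c hf hg
  exact eval_add _ _ hf hg

theorem eventually_eval_mul (f g : RatFunc K) :
    ∀ᶠ c in cofinite, (f * g).eval (RingHom.id K) c =
      f.eval (RingHom.id K) c * g.eval (RingHom.id K) c := by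
  filter_upwards [f.eventually_eval_denom_ne_zero, g.eventually_eval_denom_ne_zero] with c hf hg
  exact eval_mul _ _ hf hg

theorem eventually_eval_neg (f : RatFunc K) :
    ∀ᶠ c in cofinite, (-f).eval (RingHom.id K) c = -f.eval (RingHom.id K) c := by
  filter_upwards [eventually_eval_mul (C (-1)) f] with c h
  rwa [eval_C, RingHom.id_apply, neg_one_mul, map_neg, map_one, neg_one_mul] at h

theorem eventually_eval_ne_zero {f : RatFunc K} (hf : f ≠ 0) :
    ∀ᶠ c in cofinite, f.eval (RingHom.id K) c ≠ 0 := by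
  filter_upwards [Polynomial.eventually_eval_ne_zero (num_ne_zero hf),
    f.eventually_eval_denom_ne_zero] with c hnum hdenom
  exact div_ne_zero hnum hdenom

theorem eventually_eval_ne {f g : RatFunc K} (hfg : f ≠ g) :
    ∀ᶠ c in cofinite, f.eval (RingHom.id K) c ≠ g.eval (RingHom.id K) c := by
  filter_upwards [eventually_eval_ne_zero (sub_ne_zero.2 hfg), eventually_eval_add f (-g),
    eventually_eval_neg g] with c hsub hadd hneg
  rwa [sub_eq_add_neg, hadd, hneg, ← sub_eq_add_neg, sub_ne_zero] at hsub

end RatFunc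

namespace FirstOrder.Language

variable {K : Type*} [Field K] {α : Type*}

theorem Term.eventually_eval_realize (t : Language.ring.Term α) (v : α → RatFunc K) :
    ∀ᶠ c in cofinite, (t.realize v).eval (RingHom.id K) c =
      t.realize (RatFunc.eval (RingHom.id K) c ∘ v) := by
  induction t with
  | var x => exact Eventually.of_forall fun _ => rfl
  | func f ts ih =>
    cases f with
    | add =>
      filter_upwards [ih 0, ih 1, RatFunc.eventually_eval_add _ _] with c h0 h1 h
      exact h.trans (congrArg₂ (· + ·) h0 h1)
    | mul =>
      filter_upwards [ih 0, ih 1, RatFunc.eventually_eval_mul _ _] with c h0 h1 h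
      exact h.trans (congrArg₂ (· * ·) h0 h1)
    | neg =>
      filter_upwards [ih 0, RatFunc.eventually_eval_neg _] with c h0 h
      exact h.trans (congrArg Neg.neg h0)
    | zero => exact Eventually.of_forall fun _ => RatFunc.eval_zero _ _
    | one => exact Eventually.of_forall fun _ => RatFunc.eval_one _ _

theorem BoundedFormula.IsQF.eventually_realize_eval_iff {k : ℕ}
    {φ : Language.ring.BoundedFormula α k} (hφ : φ.IsQF) (v : α → RatFunc K)
    (xs : Fin k → RatFunc K) :
    ∀ᶠ c in cofinite, φ.Realize (RatFunc.eval (RingHom.id K) c ∘ v)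
      (RatFunc.eval (RingHom.id K) c ∘ xs) ↔ φ.Realize v xs := by
  induction hφ with
  | falsum => exact Eventually.of_forall fun _ => Iff.rfl
  | of_isAtomic h =>
    cases h with
    | equal t₁ t₂ =>
      simp only [realize_bdEqual, ← Sum.comp_elim]
      obtain heq | hne := eq_or_ne (t₁.realize (Sum.elim v xs)) (t₂.realize (Sum.elim v xs))
      · filter_upwards [t₁.eventually_eval_realize (Sum.elim v xs),
          t₂.eventually_eval_realize (Sum.elim v xs)] with c h₁ h₂
        exact iff_of_true (by rw [← h₁, ← h₂, heq]) heq
      · filter_upwards [t₁.eventually_eval_realize (Sum.elim v xs),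
          t₂.eventually_eval_realize (Sum.elim v xs), RatFunc.eventually_eval_ne hne]
          with c h₁ h₂ h
        rw [← h₁, ← h₂]
        exact iff_of_false h hne
    | rel R _ => exact isEmptyElim R
  | imp _ _ ih₁ ih₂ =>
    filter_upwards [ih₁, ih₂] with c h₁ h₂
    simp only [realize_imp, h₁, h₂]

theorem BoundedFormula.IsQF.eventually_formula_realize_eval_iff
    {φ : Language.ring.Formula α} (hφ : φ.IsQF) (v : α → RatFunc K) :
    ∀ᶠ c in cofinite, φ.Realize (RatFunc.eval (RingHom.id K) c ∘ v) ↔ φ.Realize v := by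
  filter_upwards [hφ.eventually_realize_eval_iff v default] with c h
  unfold Formula.Realize
  convert h using 2

end FirstOrder.Language

/-- An infinite field `K` is existentially closed in the rational function field
`K(t)`: every existential ring-sentence with parameters from `K` true in `K(t)`
is true in `K`. -/
theorem infinite_field_existentiallyClosed_in_ratFunc
    (K : Type*) [Field K] [Infinite K]
    (m n : ℕ) (φ : Language.ring.Formula (Fin m ⊕ Fin n)) (hφ : φ.IsQF)
    (a : Fin m → K)
    (hF : ∃ b : Fin n → RatFunc K,
      φ.Realize (Sum.elim (fun i => algebraMap K (RatFunc K) (a i)) b)) :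
    ∃ b : Fin n → K, φ.Realize (Sum.elim a b) := by
  obtain ⟨b, hb⟩ := hF
  obtain ⟨c, hc⟩ := (hφ.eventually_formula_realize_eval_iff
    (Sum.elim (fun i => algebraMap K (RatFunc K) (a i)) b)).exists
  refine ⟨RatFunc.eval (RingHom.id K) c ∘ b, ?_⟩
  have hv : RatFunc.eval (RingHom.id K) c ∘ Sum.elim (fun i => algebraMap K (RatFunc K) (a i)) b
      = Sum.elim a (RatFunc.eval (RingHom.id K) c ∘ b) := by
    ext (i | i) <;> simp
  exact hv ▸ hc.2 hb
end

section
/- Let K be a field, F(x), G(x) ∈ K[x] with G ≠ 0, and let g(x,y) ∈ K[x,y]. If G(x)·y − F(x) does not divide g(x,y) in K[x,y] and F, G are coprime, then g(x, F(x)/G(x)) is a nonzero element of the rational function field K(x). -/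
/-!
If `F/G` were a root of `g` over `K(x)`, then `G y - F` would divide `g` in `K(x)[y]`. Coprimality
of `F` and `G` makes `G y - F` primitive, so by Gauss's lemma it would already divide `g` in
`K[x][y]`.
-/

open Polynomial

namespace Polynomial

theorem isPrimitive_C_mul_X_sub_C_of_isCoprime {R : Type*} [CommRing R] {a b : R}
    (h : IsCoprime b a) : (C a * X - C b).IsPrimitive := by
  intro r hr
  have hra : r ∣ a := by simpa using (C_dvd_iff_dvd_coeff r _).mp hr 1
  have hrb : r ∣ b := by simpa using (C_dvd_iff_dvd_coeff r _).mp hr 0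
  obtain ⟨u, v, huv⟩ := h
  exact isUnit_of_dvd_one (huv ▸ dvd_add (hrb.mul_left u) (hra.mul_left v))

theorem C_mul_X_sub_C_dvd_of_isRoot {L : Type*} [Field L] {a b : L} {p : L[X]} (ha : a ≠ 0)
    (h : p.IsRoot (b / a)) : C a * X - C b ∣ p := by
  have hfactor : C a * X - C b = C a * (X - C (b / a)) := by
    rw [mul_sub, ← C_mul, mul_div_cancel₀ b ha]
  rw [hfactor, (isUnit_C.mpr ha.isUnit).mul_left_dvd]
  exact dvd_iff_isRoot.mpr h

end Polynomial

/-- If `G(x)·y − F(x)` does not divide `g(x,y)` in `K[x,y]` and `F, G` are coprime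
with `G ≠ 0`, then `g(x, F(x)/G(x))` is a nonzero element of `K(x)`. -/
theorem eval_at_FdivG_ne_zero_of_not_dvd
    (K : Type*) [Field K] (F G : Polynomial K) (hG : G ≠ 0)
    (g : Polynomial (Polynomial K))
    (hdvd : ¬ ((C G) * X - C F ∣ g))
    (hcop : IsCoprime F G) :
    Polynomial.eval₂ (algebraMap (Polynomial K) (RatFunc K))
      (algebraMap (Polynomial K) (RatFunc K) F / algebraMap (Polynomial K) (RatFunc K) G)
      g ≠ 0 := by
  intro hroot
  apply hdvd
  refine (isPrimitive_C_mul_X_sub_C_of_isCoprime hcop).dvd_of_fraction_map_dvd_fraction_map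
    (K := RatFunc K) ?_
  simp only [Polynomial.map_sub, Polynomial.map_mul, map_C, map_X]
  refine C_mul_X_sub_C_dvd_of_isRoot ?_ (by rwa [IsRoot, eval_map])
  exact (map_ne_zero_iff _ (IsFractionRing.injective (Polynomial K) (RatFunc K))).mpr hG
end
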